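/- Let A = (a_{ij})_{m×n} be a design matrix with nonnegative entries and no zero row, let B' ⊆ {1, …, n} be such that {a_j : j ∈ B'} is a maximal ℝ-linearly independent subset of the columns of A, and let p̂ ∈ ri(Δⁿ) with p̂_j = θ̂^{a_j} for all j for some θ̂ ∈ ℝᵐ_{>0}. Consider the reaction system on species θ₁, …, θ_m consisting, for each j ∈ B', of the reaction ∑_{i=1}^m a_{ij} θ_i → 0 with rate 1 and the reaction 0 → ∑_{i=1}^m a_{ij} θ_i with rate p̂_j. Then this reaction system has no nonempty siphons, and a point α ∈ ℝᵐ_{>0} is a point of detailed balance of this system if and only if α^{a_j} = p̂_j for all j ∈ {1, …, n}. -/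
import Mathlib


/- STATEMENT 19: For the θ-readout reaction system (reactions ∑ᵢ a_{ij} θᵢ → 0
   with rate 1 and 0 → ∑ᵢ a_{ij} θᵢ with rate p̂_j, for j ∈ B'), there are no
   nonempty siphons, and α > 0 is a point of detailed balance iff α^{a_j} = p̂_j
   for every column j. -/

open scoped BigOperators

noncomputable section

/-- A reaction `y → y'` over a species set `S`. -/
abbrev Reaction (S : Type) := (S → ℕ) × (S → ℕ)

/-- Reversibility: `y → y' ∈ R` implies `y' → y ∈ R`. -/
def Reversible {S : Type} [Fintype S] [DecidableEq S]
    (R : Finset (Reaction S)) : Prop := ∀ r ∈ R, (r.2, r.1) ∈ R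

/-- A (nonempty) siphon. -/
def IsSiphon {S : Type} [Fintype S] [DecidableEq S]
    (R : Finset (Reaction S)) (T : Set S) : Prop :=
  T.Nonempty ∧ ∀ r ∈ R, (∃ i ∈ T, 0 < r.2 i) → ∃ j ∈ T, 0 < r.1 j

/-- `α ∈ ℝ^S_{>0}` is a point of detailed balance. -/
def IsDetailedBalancePoint {S : Type} [Fintype S] [DecidableEq S]
    (R : Finset (Reaction S)) (k : Reaction S → ℝ) (α : S → ℝ) : Prop :=
  Reversible R ∧ (∀ i, 0 < α i) ∧
  ∀ r ∈ R, k r * ∏ i, α i ^ r.1 i = k (r.2, r.1) * ∏ i, α i ^ r.2 i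

/-- `A` is a design matrix: all column sums are equal. -/
def IsDesign {m n : ℕ} (A : Matrix (Fin m) (Fin n) ℤ) : Prop :=
  ∃ c : ℤ, ∀ j, ∑ i, A i j = c

/-- The complex `∑ᵢ a_{ij} θᵢ` (for a matrix `A` with nonnegative entries). -/
def colNat {m n : ℕ} (A : Matrix (Fin m) (Fin n) ℤ) (j : Fin n) : Fin m → ℕ :=
  fun i => (A i j).toNat

/-- The θ-readout reaction network: for each `j ∈ B'`, the reactions
    `∑ᵢ a_{ij} θᵢ → 0` and `0 → ∑ᵢ a_{ij} θᵢ`. -/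
def Rtheta {m n : ℕ} (A : Matrix (Fin m) (Fin n) ℤ) (B' : Finset (Fin n)) :
    Finset (Reaction (Fin m)) :=
  B'.image (fun j => (colNat A j, (fun _ => 0 : Fin m → ℕ))) ∪
  B'.image (fun j => ((fun _ => 0 : Fin m → ℕ), colNat A j))

lemma aux_prod_exp {m : ℕ} (α : Fin m → ℝ) (hα : ∀ i, 0 < α i) (c : Fin m → ℤ) :
    ∏ i, α i ^ c i = Real.exp (∑ i, (c i : ℝ) * Real.log (α i)) := by
  rw [Real.exp_sum]
  refine Finset.prod_congr rfl fun i _ => ?_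
  rw [← Real.rpow_intCast, Real.rpow_def_of_pos (hα i), mul_comm]

theorem stmt19 {m n : ℕ} (A : Matrix (Fin m) (Fin n) ℤ) (hA : IsDesign A)
    (hAnn : ∀ i j, 0 ≤ A i j) (hnorow : ∀ i : Fin m, ∃ j, A i j ≠ 0)
    (B' : Finset (Fin n))
    -- the columns indexed by `B'` form a maximal ℝ-linearly independent subset
    -- of the columns of `A`:
    (hB'indep : LinearIndependent ℝ
      (fun j : B' => fun i : Fin m => (A i (j : Fin n) : ℝ)))
    (hB'max : ∀ j : Fin n, (fun i : Fin m => (A i j : ℝ)) ∈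
      Submodule.span ℝ (Set.range fun j' : B' => fun i : Fin m => (A i (j' : Fin n) : ℝ)))
    (phat : Fin n → ℝ) (hpos : ∀ j, 0 < phat j) (hsum : ∑ j, phat j = 1)
    (θhat : Fin m → ℝ) (hθhat : ∀ i, 0 < θhat i)
    (hphat : ∀ j, phat j = ∏ i, θhat i ^ A i j)
    (k : Reaction (Fin m) → ℝ)
    (hk1 : ∀ j ∈ B', k (colNat A j, fun _ => 0) = 1)
    (hk2 : ∀ j ∈ B', k ((fun _ => 0 : Fin m → ℕ), colNat A j) = phat j) :
    (∀ T : Set (Fin m), ¬ IsSiphon (Rtheta A B') T) ∧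
    ∀ α : Fin m → ℝ, IsDetailedBalancePoint (Rtheta A B') k α ↔
      ((∀ i, 0 < α i) ∧ ∀ j : Fin n, ∏ i, α i ^ A i j = phat j) := by
  have hconv : ∀ (α : Fin m → ℝ) (j : Fin n),
      ∏ i, α i ^ (colNat A j i) = ∏ i, α i ^ A i j := by
    intro α j
    refine Finset.prod_congr rfl fun i _ => ?_
    rw [colNat, ← zpow_natCast, Int.toNat_of_nonneg (hAnn i j)]
  have hRmem : ∀ r : Reaction (Fin m), r ∈ Rtheta A B' ↔
      (∃ j ∈ B', r = (colNat A j, (fun _ => 0 : Fin m → ℕ))) ∨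
      (∃ j ∈ B', r = ((fun _ => 0 : Fin m → ℕ), colNat A j)) := by
    intro r
    simp only [Rtheta, Finset.mem_union, Finset.mem_image]
    constructor
    · rintro (⟨j, hj, rfl⟩ | ⟨j, hj, rfl⟩)
      · exact Or.inl ⟨j, hj, rfl⟩
      · exact Or.inr ⟨j, hj, rfl⟩
    · rintro (⟨j, hj, rfl⟩ | ⟨j, hj, rfl⟩)
      · exact Or.inl ⟨j, hj, rfl⟩
      · exact Or.inr ⟨j, hj, rfl⟩
  -- every row has a positive entry in a B'-column
  have hcolpos : ∀ i : Fin m, ∃ j ∈ B', 0 < A i j := by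
    intro i
    by_contra h
    push_neg at h
    have hz : ∀ j' : B', (fun i' : Fin m => (A i' (j' : Fin n) : ℝ)) i = 0 := by
      intro j'
      have h1 := h j' j'.2
      have h2 := hAnn i j'
      have : A i (j' : Fin n) = 0 := le_antisymm h1 h2
      simp [this]
    have h0 : ∀ v ∈ Submodule.span ℝ
        (Set.range fun j' : B' => fun i' : Fin m => (A i' (j' : Fin n) : ℝ)),
        v i = 0 := by
      intro v hv
      induction hv using Submodule.span_induction with
      | mem x hx => obtain ⟨j', rfl⟩ := hx; exact hz j'
      | zero => rfl
      | add x y _ _ hx hy => simp [Pi.add_apply, hx, hy]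
      | smul c x _ hx => simp [Pi.smul_apply, hx]
    obtain ⟨j0, hj0⟩ := hnorow i
    have := h0 _ (hB'max j0)
    exact hj0 (by exact_mod_cast this)
  constructor
  · rintro T ⟨⟨i, hi⟩, hsi⟩
    obtain ⟨j, hj, hpos'⟩ := hcolpos i
    have hr : ((fun _ => 0 : Fin m → ℕ), colNat A j) ∈ Rtheta A B' :=
      (hRmem _).2 (Or.inr ⟨j, hj, rfl⟩)
    obtain ⟨j', _, hj'⟩ := hsi _ hr ⟨i, hi, by
      simp only [colNat]
      omega⟩
    simp at hj'
  · intro α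
    constructor
    · rintro ⟨hrev, hαpos, hbal⟩
      refine ⟨hαpos, ?_⟩
      have hB : ∀ j ∈ B', ∏ i, α i ^ A i j = phat j := by
        intro j hj
        have hr : (colNat A j, (fun _ => 0 : Fin m → ℕ)) ∈ Rtheta A B' :=
          (hRmem _).2 (Or.inl ⟨j, hj, rfl⟩)
        have hb := hbal _ hr
        simp only [hk1 j hj, hk2 j hj, pow_zero, Finset.prod_const_one,
          one_mul, mul_one] at hb
        rw [← hconv α j]; exact hb
      -- logarithmic argument
      set L : Fin m → ℝ := fun i => Real.log (α i) - Real.log (θhat i) with hL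
      have hgen : ∀ j ∈ B', ∑ i, (A i j : ℝ) * L i = 0 := by
        intro j hj
        have h1 : ∏ i, α i ^ A i j = ∏ i, θhat i ^ A i j := by
          rw [hB j hj, hphat j]
        rw [aux_prod_exp α hαpos, aux_prod_exp θhat hθhat] at h1
        have h2 := Real.exp_injective h1
        have : ∑ i, (A i j : ℝ) * L i =
            (∑ i, (A i j : ℝ) * Real.log (α i)) -
            (∑ i, (A i j : ℝ) * Real.log (θhat i)) := by
          rw [← Finset.sum_sub_distrib]
          exact Finset.sum_congr rfl fun i _ => by rw [hL]; ring
        rw [this, h2, sub_self]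
      have hspan : ∀ v ∈ Submodule.span ℝ
          (Set.range fun j' : B' => fun i' : Fin m => (A i' (j' : Fin n) : ℝ)),
          ∑ i, v i * L i = 0 := by
        intro v hv
        induction hv using Submodule.span_induction with
        | mem x hx => obtain ⟨j', rfl⟩ := hx; exact hgen j' j'.2
        | zero => simp
        | add x y _ _ hx hy =>
            simp only [Pi.add_apply, add_mul, Finset.sum_add_distrib, hx, hy, add_zero]
        | smul c x _ hx =>
            simp only [Pi.smul_apply, smul_eq_mul, mul_assoc, ← Finset.mul_sum, hx, mul_zero]
      intro j
      have hj0 := hspan _ (hB'max j)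
      have h1 : ∑ i, (A i j : ℝ) * Real.log (α i) =
          ∑ i, (A i j : ℝ) * Real.log (θhat i) := by
        have : (∑ i, (A i j : ℝ) * Real.log (α i)) -
            (∑ i, (A i j : ℝ) * Real.log (θhat i)) = 0 := by
          rw [← Finset.sum_sub_distrib, ← hj0]
          exact Finset.sum_congr rfl fun i _ => by rw [hL]; ring
        linarith
      rw [aux_prod_exp α hαpos, h1, ← aux_prod_exp θhat hθhat, ← hphat j]
    · rintro ⟨hαpos, hall⟩
      refine ⟨?_, hαpos, ?_⟩
      · intro r hr
        rcases (hRmem r).1 hr with ⟨j, hj, rfl⟩ | ⟨j, hj, rfl⟩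
        · exact (hRmem _).2 (Or.inr ⟨j, hj, rfl⟩)
        · exact (hRmem _).2 (Or.inl ⟨j, hj, rfl⟩)
      · intro r hr
        rcases (hRmem r).1 hr with ⟨j, hj, rfl⟩ | ⟨j, hj, rfl⟩
        · simp only [hk1 j hj, hk2 j hj, pow_zero, Finset.prod_const_one,
            one_mul, mul_one, hconv α j, hall j]
        · simp only [hk1 j hj, hk2 j hj, pow_zero, Finset.prod_const_one,
            one_mul, mul_one, hconv α j, hall j]
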